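/- arXiv:0811.4726 — 3 statements merged into one kernel-verified Lean document; each statement's English description precedes it below -/
import Mathlib

section
/- Let d ≥ 2 be composite with smallest prime factor l, set a = d/l, and assume n = 2, a ≥ 3. Then u(d) - u(l*) = ((a-2)/(2a-2))·(2d - a² - 2a + 3), where l* = d·l/(d - l) and u(e) = C(2 + d/e, 2) + e - 1 extended to real e. Consequently u(d) > u(l*) if and only if a ≤ 2l - 2. -/
/-!
Since `d / l* = a - 1`, one has `u(l*) = a(a+1)/2 + la/(a-1) - 1`, while `u(d) = d + 2`; clearing the
denominator `2(a-1)` turns `u(d) - u(l*)` into the stated product. Its first factor is positive for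
`a ≥ 3`, and `2d - a² - 2a + 3 = 3 - a(a + 2 - 2l)` is positive exactly when the integer
`a + 2 - 2l` is not positive, because `a ≥ 3`.
-/

def u (d e : ℚ) : ℚ := (d / e + 1) * (d / e + 2) / 2 + e - 1

def lstar (d l : ℚ) : ℚ := d * l / (d - l)

lemma u_self {d : ℚ} (hd : d ≠ 0) : u d d = d + 2 := by
  rw [u, div_self hd]
  ring

lemma div_lstar {d l : ℚ} (hd : d ≠ 0) (hl : l ≠ 0) : d / lstar d l = d / l - 1 := by
  rw [lstar, div_div_eq_mul_div, mul_div_mul_left _ _ hd, sub_div, div_self hl]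

theorem u_sub_u_lstar {l a : ℚ} (hl : l ≠ 0) (ha₀ : a ≠ 0) (ha₁ : a ≠ 1) :
    u (l * a) (l * a) - u (l * a) (lstar (l * a) l)
      = (a - 2) / (2 * a - 2) * (2 * (l * a) - a ^ 2 - 2 * a + 3) := by
  have hla : l * a ≠ 0 := mul_ne_zero hl ha₀
  have ha₁' : a - 1 ≠ 0 := sub_ne_zero.mpr ha₁
  have h2a : 2 * a - 2 ≠ 0 := by
    rw [show 2 * a - 2 = 2 * (a - 1) by ring]
    exact mul_ne_zero two_ne_zero ha₁'
  have hlstar : lstar (l * a) l = l * a / (a - 1) := by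
    rw [lstar, show l * a - l = l * (a - 1) by ring]
    field_simp
  rw [u_self hla, u, div_lstar hla hl, mul_div_cancel_left₀ a hl, hlstar]
  field_simp
  ring

lemma sq_add_two_mul_lt_two_mul_add_three_iff {l a : ℕ} (ha : 3 ≤ a) :
    (0 : ℚ) < 2 * (l * a) - a ^ 2 - 2 * a + 3 ↔ a + 2 ≤ 2 * l := by
  have hA : (3 : ℚ) ≤ a := by exact_mod_cast ha
  constructor
  · intro hpos
    by_contra! hlt
    have hle : (2 * l : ℚ) ≤ a + 1 := by exact_mod_cast Nat.le_of_lt_succ hlt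
    nlinarith
  · intro hle
    have hle' : (a + 2 : ℚ) ≤ 2 * l := by exact_mod_cast hle
    nlinarith

theorem stmt_6_general (d : ℕ) (l : ℕ) (hl : l = d.minFac)
    (a : ℕ) (ha : a = d / l) (ha3 : 3 ≤ a) :
    (((d : ℚ) / d + 1) * ((d : ℚ) / d + 2) / 2 + d - 1)
      - (((d : ℚ) / ((d : ℚ) * l / ((d : ℚ) - l)) + 1)
          * ((d : ℚ) / ((d : ℚ) * l / ((d : ℚ) - l)) + 2) / 2
          + (d : ℚ) * l / ((d : ℚ) - l) - 1)
      = (((a : ℚ) - 2) / (2 * a - 2)) * (2 * d - a ^ 2 - 2 * a + 3) ∧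
    ((((d : ℚ) / ((d : ℚ) * l / ((d : ℚ) - l)) + 1)
          * ((d : ℚ) / ((d : ℚ) * l / ((d : ℚ) - l)) + 2) / 2
          + (d : ℚ) * l / ((d : ℚ) - l) - 1)
        < (((d : ℚ) / d + 1) * ((d : ℚ) / d + 2) / 2 + d - 1)
      ↔ a ≤ 2 * l - 2) := by
  have hda : d = l * a := by rw [ha, Nat.mul_div_cancel' (hl ▸ Nat.minFac_dvd d)]
  have hA : (3 : ℚ) ≤ a := by exact_mod_cast ha3
  have hdiff := u_sub_u_lstar (l := (l : ℚ)) (a := a)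
    (by exact_mod_cast hl ▸ (Nat.minFac_pos d).ne') (by positivity) (by linarith)
  have hcoef : (0 : ℚ) < (a - 2) / (2 * a - 2) := by
    apply div_pos <;> linarith
  rw [← Nat.cast_mul, ← hda] at hdiff
  simp only [u, lstar] at hdiff
  refine ⟨hdiff, ?_⟩
  rw [← sub_pos, hdiff, mul_pos_iff_of_pos_left hcoef, hda,
    Nat.cast_mul, sq_add_two_mul_lt_two_mul_add_three_iff ha3]
  omega

theorem stmt_6 (d : ℕ) (hd : 2 ≤ d) (hd' : ¬ d.Prime) (l : ℕ) (hl : l = d.minFac)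
    (a : ℕ) (ha : a = d / l) (ha3 : 3 ≤ a) :
    (((d : ℚ) / d + 1) * ((d : ℚ) / d + 2) / 2 + d - 1)
      - (((d : ℚ) / ((d : ℚ) * l / ((d : ℚ) - l)) + 1)
          * ((d : ℚ) / ((d : ℚ) * l / ((d : ℚ) - l)) + 2) / 2
          + (d : ℚ) * l / ((d : ℚ) - l) - 1)
      = (((a : ℚ) - 2) / (2 * a - 2)) * (2 * d - a ^ 2 - 2 * a + 3) ∧
    ((((d : ℚ) / ((d : ℚ) * l / ((d : ℚ) - l)) + 1)
          * ((d : ℚ) / ((d : ℚ) * l / ((d : ℚ) - l)) + 2) / 2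
          + (d : ℚ) * l / ((d : ℚ) - l) - 1)
        < (((d : ℚ) / d + 1) * ((d : ℚ) / d + 2) / 2 + d - 1)
      ↔ a ≤ 2 * l - 2) :=
  stmt_6_general d l hl a ha ha3
end

section
/- For all integers r ≥ 2, a ≥ 2, m ≥ 2 with m dividing a, one has C(r - 1 + a, r) ≥ C(r + a/m, r) + m - 2. -/
/-! Writing `a = m * b` and `r = s + 1`, the top index `r - 1 + a` exceeds `r + b` by
`(m - 1) * b - 1 ≥ m - 2`. Each unit step of the top index raises `C(·, s + 1)` by at least one,
since Pascal's rule adds `C(·, s) ≥ 1`. -/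

theorem Nat.choose_succ_add_le {n s : ℕ} (hs : s ≤ n) (j : ℕ) :
    n.choose (s + 1) + j ≤ (n + j).choose (s + 1) := by
  induction j with
  | zero => simp
  | succ j ih =>
    have hpos : 0 < (n + j).choose s := Nat.choose_pos (by omega)
    rw [← Nat.add_assoc n, Nat.choose_succ_succ']
    omega

theorem stmt_11 (r a m : ℕ) (hr : 2 ≤ r) (ha : 2 ≤ a) (hm : 2 ≤ m) (hma : m ∣ a) :
    (r + a / m).choose r + m - 2 ≤ (r - 1 + a).choose r := by
  obtain ⟨b, rfl⟩ := hma
  obtain ⟨s, rfl⟩ : ∃ s, r = s + 1 := ⟨r - 1, by omega⟩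
  have hb : 1 ≤ b := Nat.pos_of_ne_zero (by rintro rfl; simp at ha)
  have hmb : m + b ≤ m * b + 1 := by nlinarith
  rw [Nat.mul_div_cancel_left b (by omega)]
  calc (s + 1 + b).choose (s + 1) + m - 2
      ≤ (s + 1 + b).choose (s + 1) + (m * b - b - 1) := by omega
    _ ≤ (s + 1 + b + (m * b - b - 1)).choose (s + 1) := Nat.choose_succ_add_le (by omega) _
    _ = (s + 1 - 1 + m * b).choose (s + 1) := by congr 1; omega
end

section
/- For integers k ≥ 2 and m ≥ 1, set e = 2km² + 2m² + 3m, e' = ke, and d = 2mke. Then e < e' and u(e) = u(e'), where u(x) = C(2 + d/x, 2) + x - 1. -/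
/-- The paper's `u_{2,d}(x) = C(2 + d/x, 2) + x - 1`, written over `ℚ`. -/
def u2 (d x : ℚ) : ℚ := (d / x + 1) * (d / x + 2) / 2 + x - 1

lemma u2_mul_self {x : ℚ} (hx : x ≠ 0) (q : ℚ) :
    u2 (q * x) x = (q + 1) * (q + 2) / 2 + x - 1 := by
  rw [u2, mul_div_cancel_right₀ q hx]

theorem stmt_18 (k m : ℕ) (hk : 2 ≤ k) (hm : 1 ≤ m)
    (e e' d : ℕ) (he : e = 2 * k * m ^ 2 + 2 * m ^ 2 + 3 * m) (he' : e' = k * e)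
    (hd : d = 2 * m * k * e) :
    e < e' ∧
    ((d : ℚ) / e + 1) * ((d : ℚ) / e + 2) / 2 + e - 1
      = ((d : ℚ) / e' + 1) * ((d : ℚ) / e' + 2) / 2 + e' - 1 := by
  have he_pos : 0 < e := by omega
  have he'_pos : 0 < e' := by rw [he']; positivity
  refine ⟨he' ▸ lt_mul_left he_pos (by omega), ?_⟩
  have he'Q : (e' : ℚ) = k * e := by rw [he']; push_cast; ring
  change u2 d e = u2 d e'
  -- `d / e = 2mk` and `d / e' = 2m`; passing from `e` to `e'` the binomial term drops by exactly `(k - 1) e`.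
  calc u2 d e = u2 (2 * m * k * e) e := by rw [hd]; push_cast; ring_nf
    _ = (2 * m * k + 1) * (2 * m * k + 2) / 2 + e - 1 := u2_mul_self (by positivity) _
    _ = (2 * m + 1) * (2 * m + 2) / 2 + e' - 1 := by rw [he'Q, he]; push_cast; ring
    _ = u2 (2 * m * e') e' := (u2_mul_self (by positivity) _).symm
    _ = u2 d e' := by rw [he'Q, hd]; push_cast; ring_nf
end
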